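/- arXiv:2511.17328 — 2 statements merged into one kernel-verified Lean document; each statement's English description precedes it below -/
import Mathlib

section
/- Let γ > 0, c_f > 0 and z₀ ∈ ℝ. Let ε ↦ c_ε > 0 and ε ↦ a_ε > 0 be functions of ε > 0 with c_ε → c_f and a_ε → +∞ as ε → 0⁺, and for each small ε > 0 define U_ε, Q_ε using parameters a = a_ε and c = c_ε. Then, as ε → 0⁺: sup_{z ≤ z₀} |U_ε(z) − U_f(z)| → 0, sup_{z ≤ z₀} |U_ε'(z) − U_f'(z)| → 0, sup_{z ≤ z₀} |Q_ε(z)| → 0, and sup_{z ≤ z₀} |Q_ε'(z)| → 0. -/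
open MeasureTheory Real Filter Set Topology

noncomputable def om1 (γ ε : ℝ) : ℝ := (1 + γ * ε + Real.sqrt ((1 - γ * ε) ^ 2 - 4 * ε)) / 2

noncomputable def om2 (γ ε : ℝ) : ℝ := (1 + γ * ε - Real.sqrt ((1 - γ * ε) ^ 2 - 4 * ε)) / 2

noncomputable def Cx (γ x c ε : ℝ) : ℝ :=
  (1 / (c * (om1 γ ε - om2 γ ε))) *
    ((1 - om2 γ ε) * Real.exp (om1 γ ε * x / c) - (1 - om1 γ ε) * Real.exp (om2 γ ε * x / c))

noncomputable def Dx (γ x c ε : ℝ) : ℝ :=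
  (ε / (c * (om1 γ ε - om2 γ ε))) *
    (-Real.exp (om1 γ ε * x / c) + Real.exp (om2 γ ε * x / c))

noncomputable def Upulse (K : ℝ → ℝ) (γ a c ε z : ℝ) : ℝ :=
  ∫ x in Iic z, Cx γ (x - z) c ε * ∫ y in (x - a)..x, K y

noncomputable def Qpulse (K : ℝ → ℝ) (γ a c ε z : ℝ) : ℝ :=
  ∫ x in Iic z, Dx γ (x - z) c ε * ∫ y in (x - a)..x, K y

noncomputable def Uf (K : ℝ → ℝ) (cf z : ℝ) : ℝ :=
  (1 / cf) * ∫ x in Iic z, Real.exp ((x - z) / cf) * ∫ y in Iic x, K y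

/-!
Both kernels are combinations of `exp (ω₁ x / c)` and `exp (ω₂ x / c)`, so `U_ε` and `Q_ε` are
combinations of the exponential smoothing `expSmooth r g z = ∫_{x ≤ z} e^{r (x - z)} g x` (the
solution of `u' = g - r u` bounded at `-∞`) of the window `g = ∫_{x-a}^x K`, while `U_f` is `1/c_f`
times `expSmooth (1/c_f)` of the cumulative integral of `K`. As `ε → 0`, `ω₁ → 1` and `ω₂ → 0`: the
rates tend to `(1/c_f, 0)`, the coefficients of `U_ε` to `(1/c_f, 0)` and those of `Q_ε` to
`(0, 0)`. Every function involved is bounded by `C e^{ρ x}`, which makes all estimates uniform on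
`z ≤ z₀`: `expSmooth r g` is Lipschitz in `1/(r + ρ)` and in `g` for this weighted norm, and the
window differs from the cumulative integral by `∫_{-∞}^{x-a} K = O(e^{-ρ a} e^{ρ x})`. Derivatives
are treated the same way through `(expSmooth r g)' = g - r • expSmooth r g`.
-/

section UniformConvergence

variable {ι β : Type*} {l : Filter ι} {s : Set β} {F : ι → β → ℝ} {f : β → ℝ}

lemma tendstoUniformlyOn_of_abs_sub_le {Φ : ι → ℝ} (hΦ : Tendsto Φ l (𝓝 0))
    (hF : ∀ᶠ i in l, ∀ x ∈ s, |F i x - f x| ≤ Φ i) : TendstoUniformlyOn F f l s := by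
  refine Metric.tendstoUniformlyOn_iff.2 fun δ hδ => ?_
  filter_upwards [hF, hΦ.eventually (eventually_lt_nhds hδ)] with i hi hΦδ x hx
  rw [dist_comm, Real.dist_eq]
  exact (hi x hx).trans_lt hΦδ

lemma TendstoUniformlyOn.eventually_abs_sub_lt (hF : TendstoUniformlyOn F f l s) :
    ∀ δ > 0, ∀ᶠ i in l, ∀ x ∈ s, |F i x - f x| < δ := fun δ hδ => by
  filter_upwards [Metric.tendstoUniformlyOn_iff.1 hF δ hδ] with i hi x hx
  rw [← Real.dist_eq, dist_comm]
  exact hi x hx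

lemma tendstoUniformlyOn_mul_of_tendsto_zero {u : ι → ℝ} {M : ℝ} (hu : Tendsto u l (𝓝 0))
    (hFM : ∀ᶠ i in l, ∀ x ∈ s, |F i x| ≤ M) :
    TendstoUniformlyOn (fun i x => u i * F i x) (fun _ => 0) l s := by
  refine tendstoUniformlyOn_of_abs_sub_le (Φ := fun i => |u i| * M)
    (by simpa using hu.abs.mul_const M) ?_
  filter_upwards [hFM] with i hi x hx
  rw [sub_zero, abs_mul]
  exact mul_le_mul_of_nonneg_left (hi x hx) (abs_nonneg _)

lemma TendstoUniformlyOn.mul_of_tendsto {u : ι → ℝ} {u₀ M : ℝ} (hF : TendstoUniformlyOn F f l s)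
    (hu : Tendsto u l (𝓝 u₀)) (hFM : ∀ᶠ i in l, ∀ x ∈ s, |F i x| ≤ M) :
    TendstoUniformlyOn (fun i x => u i * F i x) (fun x => u₀ * f x) l s := by
  have hsmall := tendstoUniformlyOn_mul_of_tendsto_zero
    (by simpa using hu.sub_const u₀ : Tendsto (fun i => u i - u₀) l (𝓝 0)) hFM
  have hconst := (Real.uniformContinuous_const_mul (x := u₀)).comp_tendstoUniformlyOn hF
  refine ((hsmall.fun_add hconst).congr (Eventually.of_forall fun i x _ => ?_)).congr_right
    fun x _ => ?_
  · simp only [Function.comp_apply]; ring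
  · simp only [Function.comp_apply]; ring

end UniformConvergence

section ExpBounds

variable {f g : ℝ → ℝ} {D r ρ s : ℝ}

lemma nonneg_of_forall_abs_le_mul_exp (hgD : ∀ x, |g x| ≤ D * exp (ρ * x)) : 0 ≤ D := by
  simpa using (abs_nonneg _).trans (hgD 0)

lemma abs_integral_Iic_le_of_abs_le_exp (hs : 0 < s) (hf : ∀ x, |f x| ≤ D * exp (s * x))
    (z : ℝ) : |∫ x in Iic z, f x| ≤ D / s * exp (s * z) := by
  have h := norm_integral_le_of_norm_le ((integrableOn_exp_mul_Iic hs z).const_mul D)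
    (ae_of_all _ fun x => (Real.norm_eq_abs (f x)).trans_le (hf x))
  rwa [integral_const_mul, integral_exp_mul_Iic hs, mul_div_assoc', ← div_mul_eq_mul_div,
    Real.norm_eq_abs] at h

lemma hasDerivAt_integral_Iic (hf : Continuous f) (hfi : ∀ w, IntegrableOn f (Iic w)) (z : ℝ) :
    HasDerivAt (fun w => ∫ x in Iic w, f x) (f z) z := by
  have h : (fun w => ∫ x in Iic w, f x) = fun w => (∫ x in Iic 0, f x) + ∫ x in (0:ℝ)..w, f x := by
    funext w
    rw [← intervalIntegral.integral_Iic_sub_Iic (hfi 0) (hfi w)]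
    ring
  rw [h]
  exact ((hf.integral_hasStrictDerivAt 0 z).hasDerivAt).const_add _

lemma abs_exp_mul_le (hg : ∀ x, |g x| ≤ D * exp (ρ * x)) (r x : ℝ) :
    |exp (r * x) * g x| ≤ D * exp ((r + ρ) * x) := by
  rw [abs_mul, abs_exp, add_mul, exp_add]
  calc exp (r * x) * |g x| ≤ exp (r * x) * (D * exp (ρ * x)) := by gcongr; exact hg x
    _ = D * (exp (r * x) * exp (ρ * x)) := by ring

lemma integrableOn_exp_mul_Iic_of_abs_le (hg : Continuous g) (hrρ : 0 < r + ρ)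
    (hgD : ∀ x, |g x| ≤ D * exp (ρ * x)) (z : ℝ) :
    IntegrableOn (fun x => exp (r * x) * g x) (Iic z) :=
  ((integrableOn_exp_mul_Iic hrρ z).const_mul D).mono'
    (by fun_prop : Continuous fun x => exp (r * x) * g x).aestronglyMeasurable
    (ae_of_all _ (abs_exp_mul_le hgD r))

end ExpBounds

noncomputable def expSmooth (r : ℝ) (g : ℝ → ℝ) (z : ℝ) : ℝ :=
  ∫ x in Iic z, exp (r * (x - z)) * g x

section ExpSmooth

variable {g g' : ℝ → ℝ} {D D' r r' ρ : ℝ}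

lemma expSmooth_eq_exp_mul (r : ℝ) (g : ℝ → ℝ) (z : ℝ) :
    expSmooth r g z = exp (-(r * z)) * ∫ x in Iic z, exp (r * x) * g x := by
  rw [expSmooth, ← integral_const_mul]
  congr 1; funext x
  rw [← mul_assoc, ← exp_add]; ring_nf

lemma integrableOn_expSmooth (hg : Continuous g) (hrρ : 0 < r + ρ)
    (hgD : ∀ x, |g x| ≤ D * exp (ρ * x)) (z : ℝ) :
    IntegrableOn (fun x => exp (r * (x - z)) * g x) (Iic z) := by
  refine IntegrableOn.congr_fun
    ((integrableOn_exp_mul_Iic_of_abs_le hg hrρ hgD z).const_mul (exp (-(r * z))))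
    (fun x _ => ?_) measurableSet_Iic
  rw [← mul_assoc, ← exp_add]; ring_nf

lemma expSmooth_const_mul_exp (hrρ : 0 < r + ρ) (D z : ℝ) :
    expSmooth r (fun x => D * exp (ρ * x)) z = D * exp (ρ * z) / (r + ρ) := by
  have h : ∀ x, exp (r * x) * (D * exp (ρ * x)) = D * exp ((r + ρ) * x) := fun x => by
    rw [add_mul, exp_add]; ring
  rw [expSmooth_eq_exp_mul]
  simp_rw [h]
  rw [integral_const_mul, integral_exp_mul_Iic hrρ,
    show ρ * z = -(r * z) + (r + ρ) * z by ring, exp_add]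
  ring

lemma abs_expSmooth_le (hrρ : 0 < r + ρ) (hgD : ∀ x, |g x| ≤ D * exp (ρ * x)) (z : ℝ) :
    |expSmooth r g z| ≤ D * exp (ρ * z) / (r + ρ) := by
  rw [expSmooth_eq_exp_mul, abs_mul, abs_exp]
  calc exp (-(r * z)) * |∫ x in Iic z, exp (r * x) * g x|
      ≤ exp (-(r * z)) * (D / (r + ρ) * exp ((r + ρ) * z)) := by
        gcongr; exact abs_integral_Iic_le_of_abs_le_exp hrρ (abs_exp_mul_le hgD r) z
    _ = D * exp (ρ * z) / (r + ρ) := by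
        rw [show ρ * z = -(r * z) + (r + ρ) * z by ring, exp_add]; ring

lemma hasDerivAt_expSmooth (hg : Continuous g) (hrρ : 0 < r + ρ)
    (hgD : ∀ x, |g x| ≤ D * exp (ρ * x)) (z : ℝ) :
    HasDerivAt (expSmooth r g) (g z - r * expSmooth r g z) z := by
  have hG := hasDerivAt_integral_Iic (by fun_prop) (integrableOn_exp_mul_Iic_of_abs_le hg hrρ hgD) z
  have hE : HasDerivAt (fun w => exp (-(r * w))) (exp (-(r * z)) * -r) z := by
    simpa using ((hasDerivAt_id z).const_mul r).neg.exp
  have hinv : exp (-(r * z)) * exp (r * z) = 1 := by rw [← exp_add, neg_add_cancel, exp_zero]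
  rw [funext (expSmooth_eq_exp_mul r g)]
  refine (hE.mul hG).congr_deriv ?_
  linear_combination g z * hinv

lemma expSmooth_sub (hg : Continuous g) (hg' : Continuous g') (hrρ : 0 < r + ρ)
    (hgD : ∀ x, |g x| ≤ D * exp (ρ * x)) (hg'D : ∀ x, |g' x| ≤ D' * exp (ρ * x)) (z : ℝ) :
    expSmooth r g z - expSmooth r g' z = expSmooth r (fun x => g x - g' x) z := by
  rw [expSmooth, expSmooth, expSmooth, ← integral_sub (integrableOn_expSmooth hg hrρ hgD z)
    (integrableOn_expSmooth hg' hrρ hg'D z)]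
  simp only [mul_sub]

lemma abs_expSmooth_sub_expSmooth_le_of_le (hg : Continuous g) (hrρ : 0 < r + ρ) (hrr' : r ≤ r')
    (hgD : ∀ x, |g x| ≤ D * exp (ρ * x)) (z : ℝ) :
    |expSmooth r g z - expSmooth r' g z|
      ≤ D * exp (ρ * z) / (r + ρ) - D * exp (ρ * z) / (r' + ρ) := by
  have hr'ρ : 0 < r' + ρ := by linarith
  have hD := nonneg_of_forall_abs_le_mul_exp hgD
  have hexpD : ∀ x, |D * exp (ρ * x)| ≤ D * exp (ρ * x) := fun x =>
    (abs_of_nonneg (by positivity)).le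
  -- the kernel difference is nonnegative on `x ≤ z`, so `g` may be replaced by its envelope
  rw [← expSmooth_const_mul_exp hrρ D z, ← expSmooth_const_mul_exp hr'ρ D z,
    expSmooth, expSmooth, expSmooth, expSmooth,
    ← integral_sub (integrableOn_expSmooth hg hrρ hgD z) (integrableOn_expSmooth hg hr'ρ hgD z),
    ← integral_sub (integrableOn_expSmooth (by fun_prop) hrρ hexpD z)
      (integrableOn_expSmooth (by fun_prop) hr'ρ hexpD z), ← Real.norm_eq_abs]
  refine norm_integral_le_of_norm_le ((integrableOn_expSmooth (by fun_prop) hrρ hexpD z).sub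
    (integrableOn_expSmooth (by fun_prop) hr'ρ hexpD z)) ?_
  refine (ae_restrict_iff' measurableSet_Iic).2 (ae_of_all _ fun x (hx : x ≤ z) => ?_)
  have hle : exp (r' * (x - z)) ≤ exp (r * (x - z)) :=
    exp_le_exp.2 (mul_le_mul_of_nonpos_right hrr' (sub_nonpos.2 hx))
  rw [← sub_mul, ← sub_mul, norm_mul, Real.norm_eq_abs, Real.norm_eq_abs,
    abs_of_nonneg (sub_nonneg.2 hle)]
  exact mul_le_mul_of_nonneg_left (hgD x) (sub_nonneg.2 hle)

lemma abs_expSmooth_sub_expSmooth_le (hg : Continuous g) (hrρ : 0 < r + ρ) (hr'ρ : 0 < r' + ρ)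
    (hgD : ∀ x, |g x| ≤ D * exp (ρ * x)) (z : ℝ) :
    |expSmooth r g z - expSmooth r' g z| ≤ D * exp (ρ * z) * |1 / (r + ρ) - 1 / (r' + ρ)| := by
  have hDe : 0 ≤ D * exp (ρ * z) := mul_nonneg (nonneg_of_forall_abs_le_mul_exp hgD) (exp_pos _).le
  rcases le_total r r' with hrr' | hr'r
  · calc _ ≤ D * exp (ρ * z) / (r + ρ) - D * exp (ρ * z) / (r' + ρ) :=
          abs_expSmooth_sub_expSmooth_le_of_le hg hrρ hrr' hgD z
      _ = D * exp (ρ * z) * (1 / (r + ρ) - 1 / (r' + ρ)) := by ring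
      _ ≤ _ := mul_le_mul_of_nonneg_left (le_abs_self _) hDe
  · calc _ ≤ D * exp (ρ * z) / (r' + ρ) - D * exp (ρ * z) / (r + ρ) := by
          rw [abs_sub_comm]; exact abs_expSmooth_sub_expSmooth_le_of_le hg hr'ρ hr'r hgD z
      _ = D * exp (ρ * z) * (1 / (r' + ρ) - 1 / (r + ρ)) := by ring
      _ ≤ _ := by rw [abs_sub_comm]; exact mul_le_mul_of_nonneg_left (le_abs_self _) hDe

end ExpSmooth

lemma tendstoUniformlyOn_expSmooth {ι : Type*} {l : Filter ι} {r : ι → ℝ} {g : ι → ℝ → ℝ}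
    {η : ι → ℝ} {g₀ : ℝ → ℝ} {r₀ D ρ : ℝ} (hρ : 0 ≤ ρ) (hr₀ : 0 < r₀ + ρ)
    (hr : Tendsto r l (𝓝 r₀)) (hg₀ : Continuous g₀) (hg₀D : ∀ x, |g₀ x| ≤ D * exp (ρ * x))
    (hg : ∀ᶠ i in l, Continuous (g i) ∧ ∀ x, |g i x| ≤ D * exp (ρ * x))
    (hη : Tendsto η l (𝓝 0)) (hgη : ∀ᶠ i in l, ∀ x, |g i x - g₀ x| ≤ η i * exp (ρ * x))
    (z₀ : ℝ) :
    TendstoUniformlyOn (fun i => expSmooth (r i) (g i)) (expSmooth r₀ g₀) l (Iic z₀) := by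
  have hinv : Tendsto (fun i => 1 / (r i + ρ)) l (𝓝 (1 / (r₀ + ρ))) := by
    simpa only [one_div] using (hr.add_const ρ).inv₀ hr₀.ne'
  refine tendstoUniformlyOn_of_abs_sub_le
    (Φ := fun i => exp (ρ * z₀) * (D * |1 / (r i + ρ) - 1 / (r₀ + ρ)| + η i / (r₀ + ρ)))
    (by simpa using (((hinv.sub_const (1 / (r₀ + ρ))).abs.const_mul D).add
      (hη.div_const (r₀ + ρ))).const_mul (exp (ρ * z₀))) ?_
  filter_upwards [hg, hgη, (hr.add_const ρ).eventually (eventually_gt_nhds hr₀)]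
    with i ⟨hgi, hgiD⟩ hgiη hri z (hz : z ≤ z₀)
  have hD := nonneg_of_forall_abs_le_mul_exp hg₀D
  have hηi := nonneg_of_forall_abs_le_mul_exp hgiη
  calc |expSmooth (r i) (g i) z - expSmooth r₀ g₀ z|
      ≤ |expSmooth (r i) (g i) z - expSmooth r₀ (g i) z|
        + |expSmooth r₀ (g i) z - expSmooth r₀ g₀ z| :=
        abs_sub_le _ _ _
    _ ≤ D * exp (ρ * z) * |1 / (r i + ρ) - 1 / (r₀ + ρ)| + η i * exp (ρ * z) / (r₀ + ρ) := by
        rw [expSmooth_sub hgi hg₀ hr₀ hgiD hg₀D]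
        exact add_le_add (abs_expSmooth_sub_expSmooth_le hgi hri hr₀ hgiD z)
          (abs_expSmooth_le hr₀ hgiη z)
    _ = exp (ρ * z) * (D * |1 / (r i + ρ) - 1 / (r₀ + ρ)| + η i / (r₀ + ρ)) := by ring
    _ ≤ _ := by gcongr

noncomputable def expSmoothPair (A r A' r' : ℝ) (g : ℝ → ℝ) (z : ℝ) : ℝ :=
  A * expSmooth r g z + A' * expSmooth r' g z

section ExpSmoothPair

variable {g : ℝ → ℝ} {A A' D r r' ρ : ℝ}

lemma integral_Iic_add_exp_mul (hg : Continuous g) (hgD : ∀ x, |g x| ≤ D * exp (ρ * x))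
    (hrρ : 0 < r + ρ) (hr'ρ : 0 < r' + ρ) (z : ℝ) :
    ∫ x in Iic z, (A * exp (r * (x - z)) + A' * exp (r' * (x - z))) * g x
      = expSmoothPair A r A' r' g z := by
  simp_rw [add_mul, mul_assoc]
  rw [integral_add ((integrableOn_expSmooth hg hrρ hgD z).const_mul A)
    ((integrableOn_expSmooth hg hr'ρ hgD z).const_mul A'), integral_const_mul, integral_const_mul,
    expSmoothPair, expSmooth, expSmooth]

lemma hasDerivAt_expSmoothPair (hg : Continuous g) (hgD : ∀ x, |g x| ≤ D * exp (ρ * x))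
    (hrρ : 0 < r + ρ) (hr'ρ : 0 < r' + ρ) (z : ℝ) :
    HasDerivAt (expSmoothPair A r A' r' g)
      (A * (g z - r * expSmooth r g z) + A' * (g z - r' * expSmooth r' g z)) z :=
  ((hasDerivAt_expSmooth hg hrρ hgD z).const_mul A).add
    ((hasDerivAt_expSmooth hg hr'ρ hgD z).const_mul A')

end ExpSmoothPair

noncomputable def cumulative (K : ℝ → ℝ) (x : ℝ) : ℝ := ∫ y in Iic x, K y

noncomputable def window (K : ℝ → ℝ) (a x : ℝ) : ℝ := ∫ y in (x - a)..x, K y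

section Kernel

variable {K : ℝ → ℝ} {α ρ : ℝ}

lemma integrable_of_abs_le_exp_neg_abs (hK : Continuous K) (hρ : 0 < ρ)
    (hKd : ∀ x, |K x| ≤ α * exp (-ρ * |x|)) : Integrable K := by
  have hα : 0 ≤ α := by simpa using (abs_nonneg _).trans (hKd 0)
  rw [← integrableOn_univ, ← Iic_union_Ioi (a := 0)]
  refine IntegrableOn.union ?_ ?_
  · refine ((integrableOn_exp_mul_Iic hρ 0).const_mul α).mono' hK.aestronglyMeasurable
      (ae_of_all _ fun x => (hKd x).trans
        (mul_le_mul_of_nonneg_left (exp_le_exp.2 (by nlinarith [neg_abs_le x])) hα))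
  · refine ((integrableOn_exp_mul_Ioi (neg_neg_of_pos hρ) 0).const_mul α).mono'
      hK.aestronglyMeasurable (ae_of_all _ fun x => (hKd x).trans
        (mul_le_mul_of_nonneg_left (exp_le_exp.2 (by nlinarith [le_abs_self x])) hα))

lemma window_eq_sub (hKi : Integrable K) (a x : ℝ) :
    window K a x = cumulative K x - cumulative K (x - a) :=
  (intervalIntegral.integral_Iic_sub_Iic hKi.integrableOn hKi.integrableOn).symm

lemma continuous_cumulative (hK : Continuous K) (hKi : Integrable K) : Continuous (cumulative K) :=
  continuous_iff_continuousAt.2 fun x =>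
    (hasDerivAt_integral_Iic hK (fun _ => hKi.integrableOn) x).continuousAt

lemma continuous_window (hK : Continuous K) (hKi : Integrable K) (a : ℝ) :
    Continuous (window K a) := by
  rw [funext (window_eq_sub hKi a)]
  exact (continuous_cumulative hK hKi).sub
    ((continuous_cumulative hK hKi).comp (continuous_sub_right a))

lemma abs_cumulative_le (hρ : 0 < ρ) (hKexp : ∀ y, |K y| ≤ α * exp (ρ * y)) (x : ℝ) :
    |cumulative K x| ≤ α / ρ * exp (ρ * x) :=
  abs_integral_Iic_le_of_abs_le_exp hρ hKexp x

lemma abs_window_le (hKi : Integrable K) (hρ : 0 < ρ) (hKexp : ∀ y, |K y| ≤ α * exp (ρ * y))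
    {a : ℝ} (ha : 0 ≤ a) (x : ℝ) : |window K a x| ≤ 2 * (α / ρ) * exp (ρ * x) := by
  have hshift : exp (ρ * (x - a)) ≤ exp (ρ * x) := by gcongr; linarith
  have hαρ : 0 ≤ α / ρ := div_nonneg (nonneg_of_forall_abs_le_mul_exp hKexp) hρ.le
  rw [window_eq_sub hKi]
  calc _ ≤ |cumulative K x| + |cumulative K (x - a)| := abs_sub _ _
    _ ≤ α / ρ * exp (ρ * x) + α / ρ * exp (ρ * (x - a)) :=
        add_le_add (abs_cumulative_le hρ hKexp x) (abs_cumulative_le hρ hKexp (x - a))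
    _ ≤ 2 * (α / ρ) * exp (ρ * x) := by nlinarith

lemma abs_window_sub_cumulative_le (hKi : Integrable K) (hρ : 0 < ρ)
    (hKexp : ∀ y, |K y| ≤ α * exp (ρ * y)) (a x : ℝ) :
    |window K a x - cumulative K x| ≤ α / ρ * exp (-(ρ * a)) * exp (ρ * x) := by
  rw [window_eq_sub hKi, sub_sub_cancel_left, abs_neg, mul_assoc, ← exp_add]
  convert abs_cumulative_le hρ hKexp (x - a) using 3
  ring

end Kernel

section WindowFamily

variable {ι : Type*} {l : Filter ι} {K : ℝ → ℝ} {a r r₁ r₂ A₁ A₂ : ι → ℝ} {α ρ r₀ A₀ : ℝ}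

lemma tendsto_mul_exp_neg_mul (hρ : 0 < ρ) (ha : Tendsto a l atTop) (C : ℝ) :
    Tendsto (fun i => C * exp (-(ρ * a i))) l (𝓝 0) := by
  simpa using (tendsto_exp_neg_atTop_nhds_zero.comp (ha.const_mul_atTop hρ)).const_mul C

lemma tendstoUniformlyOn_window (hKi : Integrable K) (hρ : 0 < ρ)
    (hKexp : ∀ y, |K y| ≤ α * exp (ρ * y)) (ha : Tendsto a l atTop) (z₀ : ℝ) :
    TendstoUniformlyOn (fun i => window K (a i)) (cumulative K) l (Iic z₀) := by
  have hαρ : 0 ≤ α / ρ := div_nonneg (nonneg_of_forall_abs_le_mul_exp hKexp) hρ.le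
  refine tendstoUniformlyOn_of_abs_sub_le (Φ := fun i => α / ρ * exp (-(ρ * a i)) * exp (ρ * z₀))
    (by simpa using (tendsto_mul_exp_neg_mul hρ ha (α / ρ)).mul_const (exp (ρ * z₀)))
    (Eventually.of_forall fun i x (hx : x ≤ z₀) => ?_)
  exact (abs_window_sub_cumulative_le hKi hρ hKexp (a i) x).trans (by gcongr)

lemma tendstoUniformlyOn_expSmooth_window (hK : Continuous K) (hKi : Integrable K) (hρ : 0 < ρ)
    (hKexp : ∀ y, |K y| ≤ α * exp (ρ * y)) (ha : Tendsto a l atTop) (hr : Tendsto r l (𝓝 r₀))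
    (hr₀ : 0 < r₀) (z₀ : ℝ) :
    TendstoUniformlyOn (fun i => expSmooth (r i) (window K (a i))) (expSmooth r₀ (cumulative K))
      l (Iic z₀) := by
  have hαρ : 0 ≤ α / ρ := div_nonneg (nonneg_of_forall_abs_le_mul_exp hKexp) hρ.le
  refine tendstoUniformlyOn_expSmooth (D := 2 * (α / ρ)) hρ.le (by linarith) hr
    (continuous_cumulative hK hKi) (fun x => (abs_cumulative_le hρ hKexp x).trans (by
      nlinarith [exp_pos (ρ * x)]))
    ((ha.eventually_ge_atTop 0).mono fun i hai =>
      ⟨continuous_window hK hKi _, abs_window_le hKi hρ hKexp hai⟩)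
    (tendsto_mul_exp_neg_mul hρ ha (α / ρ))
    (Eventually.of_forall fun i x => abs_window_sub_cumulative_le hKi hρ hKexp (a i) x) z₀

lemma eventually_abs_window_le (hKi : Integrable K) (hρ : 0 < ρ)
    (hKexp : ∀ y, |K y| ≤ α * exp (ρ * y)) (ha : ∀ᶠ i in l, 0 ≤ a i) (z₀ : ℝ) :
    ∀ᶠ i in l, ∀ x ∈ Iic z₀, |window K (a i) x| ≤ 2 * (α / ρ) * exp (ρ * z₀) := by
  have hαρ : 0 ≤ α / ρ := div_nonneg (nonneg_of_forall_abs_le_mul_exp hKexp) hρ.le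
  filter_upwards [ha] with i hai x (hx : x ≤ z₀)
  exact (abs_window_le hKi hρ hKexp hai x).trans (by gcongr)

lemma eventually_abs_expSmooth_window_le (hKi : Integrable K) (hρ : 0 < ρ)
    (hKexp : ∀ y, |K y| ≤ α * exp (ρ * y)) (ha : ∀ᶠ i in l, 0 ≤ a i) (hr : ∀ᶠ i in l, 0 ≤ r i)
    (z₀ : ℝ) :
    ∀ᶠ i in l, ∀ z ∈ Iic z₀,
      |expSmooth (r i) (window K (a i)) z| ≤ 2 * (α / ρ) * exp (ρ * z₀) / ρ := by
  have hαρ : 0 ≤ α / ρ := div_nonneg (nonneg_of_forall_abs_le_mul_exp hKexp) hρ.le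
  filter_upwards [ha, hr] with i hai hri z (hz : z ≤ z₀)
  refine (abs_expSmooth_le (by linarith) (abs_window_le hKi hρ hKexp hai) z).trans ?_
  gcongr; linarith

lemma tendstoUniformlyOn_expSmoothPair_window (hK : Continuous K) (hKi : Integrable K)
    (hρ : 0 < ρ) (hKexp : ∀ y, |K y| ≤ α * exp (ρ * y)) (ha : Tendsto a l atTop)
    (hA₁ : Tendsto A₁ l (𝓝 A₀)) (hA₂ : Tendsto A₂ l (𝓝 0)) (hr₁ : Tendsto r₁ l (𝓝 r₀))
    (hr₀ : 0 < r₀) (hr₂ : ∀ᶠ i in l, 0 ≤ r₂ i) (z₀ : ℝ) :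
    TendstoUniformlyOn (fun i => expSmoothPair (A₁ i) (r₁ i) (A₂ i) (r₂ i) (window K (a i)))
      (fun z => A₀ * expSmooth r₀ (cumulative K) z) l (Iic z₀) := by
  have ha₀ := ha.eventually_ge_atTop 0
  have h₁ := (tendstoUniformlyOn_expSmooth_window hK hKi hρ hKexp ha hr₁ hr₀ z₀).mul_of_tendsto
    hA₁ (eventually_abs_expSmooth_window_le hKi hρ hKexp ha₀
      (hr₁.eventually (eventually_ge_nhds hr₀)) z₀)
  have h₂ := tendstoUniformlyOn_mul_of_tendsto_zero hA₂
    (eventually_abs_expSmooth_window_le hKi hρ hKexp ha₀ hr₂ z₀)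
  have h := h₁.fun_add h₂
  simp only [add_zero] at h
  exact h

lemma tendstoUniformlyOn_deriv_expSmoothPair_window (hK : Continuous K) (hKi : Integrable K)
    (hρ : 0 < ρ) (hKexp : ∀ y, |K y| ≤ α * exp (ρ * y)) (ha : Tendsto a l atTop)
    (hA₁ : Tendsto A₁ l (𝓝 A₀)) (hA₂ : Tendsto A₂ l (𝓝 0)) (hr₁ : Tendsto r₁ l (𝓝 r₀))
    (hr₀ : 0 < r₀) (hr₂ : ∀ᶠ i in l, 0 ≤ r₂ i) (hA₂r₂ : Tendsto (fun i => A₂ i * r₂ i) l (𝓝 0))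
    (z₀ : ℝ) :
    TendstoUniformlyOn
      (fun i => deriv (expSmoothPair (A₁ i) (r₁ i) (A₂ i) (r₂ i) (window K (a i))))
      (fun z => A₀ * (cumulative K z - r₀ * expSmooth r₀ (cumulative K) z)) l (Iic z₀) := by
  have ha₀ := ha.eventually_ge_atTop 0
  have hr₁₀ := hr₁.eventually (eventually_ge_nhds hr₀)
  have hW := (tendstoUniformlyOn_window hKi hρ hKexp ha z₀).mul_of_tendsto (hA₁.add hA₂)
    (eventually_abs_window_le hKi hρ hKexp ha₀ z₀)
  have h₁ := (tendstoUniformlyOn_expSmooth_window hK hKi hρ hKexp ha hr₁ hr₀ z₀).mul_of_tendsto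
    (hA₁.mul hr₁) (eventually_abs_expSmooth_window_le hKi hρ hKexp ha₀ hr₁₀ z₀)
  have h₂ := tendstoUniformlyOn_mul_of_tendsto_zero hA₂r₂
    (eventually_abs_expSmooth_window_le hKi hρ hKexp ha₀ hr₂ z₀)
  refine (((hW.fun_sub h₁).fun_sub h₂).congr ?_).congr_right fun z _ => by ring
  filter_upwards [ha₀, hr₁₀, hr₂] with i hai hr₁i hr₂i z _
  rw [(hasDerivAt_expSmoothPair (continuous_window hK hKi _) (abs_window_le hKi hρ hKexp hai)
    (by linarith) (by linarith) z).deriv]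
  ring

end WindowFamily

noncomputable def rate₁ (γ c ε : ℝ) : ℝ := om1 γ ε / c

noncomputable def rate₂ (γ c ε : ℝ) : ℝ := om2 γ ε / c

noncomputable def coeffU₁ (γ c ε : ℝ) : ℝ := (1 - om2 γ ε) / (c * (om1 γ ε - om2 γ ε))

noncomputable def coeffU₂ (γ c ε : ℝ) : ℝ := -(1 - om1 γ ε) / (c * (om1 γ ε - om2 γ ε))

noncomputable def coeffQ (γ c ε : ℝ) : ℝ := ε / (c * (om1 γ ε - om2 γ ε))

section Pulse

variable {K : ℝ → ℝ} {γ a c ε D ρ : ℝ}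

lemma Cx_eq (γ x c ε : ℝ) :
    Cx γ x c ε = coeffU₁ γ c ε * exp (rate₁ γ c ε * x) + coeffU₂ γ c ε * exp (rate₂ γ c ε * x) := by
  simp only [Cx, coeffU₁, coeffU₂, rate₁, rate₂, div_mul_eq_mul_div]
  ring

lemma Dx_eq (γ x c ε : ℝ) :
    Dx γ x c ε = -coeffQ γ c ε * exp (rate₁ γ c ε * x) + coeffQ γ c ε * exp (rate₂ γ c ε * x) := by
  simp only [Dx, coeffQ, rate₁, rate₂, div_mul_eq_mul_div]
  ring

lemma om2_nonneg (hγ : 0 ≤ γ) (hε : 0 ≤ ε) : 0 ≤ om2 γ ε := by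
  have h : √((1 - γ * ε) ^ 2 - 4 * ε) ≤ 1 + γ * ε :=
    Real.sqrt_le_iff.2 ⟨by positivity, by nlinarith [mul_nonneg hγ hε]⟩
  unfold om2
  linarith

lemma om2_le_om1 (γ ε : ℝ) : om2 γ ε ≤ om1 γ ε := by
  unfold om1 om2
  linarith [Real.sqrt_nonneg ((1 - γ * ε) ^ 2 - 4 * ε)]

lemma rate₂_nonneg (hγ : 0 ≤ γ) (hε : 0 ≤ ε) (hc : 0 ≤ c) : 0 ≤ rate₂ γ c ε :=
  div_nonneg (om2_nonneg hγ hε) hc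

lemma rate₁_nonneg (hγ : 0 ≤ γ) (hε : 0 ≤ ε) (hc : 0 ≤ c) : 0 ≤ rate₁ γ c ε :=
  div_nonneg ((om2_nonneg hγ hε).trans (om2_le_om1 γ ε)) hc

lemma Upulse_eq (hW : Continuous (window K a)) (hWD : ∀ x, |window K a x| ≤ D * exp (ρ * x))
    (hρ : 0 < ρ) (hγ : 0 ≤ γ) (hε : 0 ≤ ε) (hc : 0 ≤ c) :
    Upulse K γ a c ε
      = expSmoothPair (coeffU₁ γ c ε) (rate₁ γ c ε) (coeffU₂ γ c ε) (rate₂ γ c ε) (window K a) := by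
  funext z
  simp only [Upulse, Cx_eq]
  exact integral_Iic_add_exp_mul hW hWD (by linarith [rate₁_nonneg hγ hε hc])
    (by linarith [rate₂_nonneg hγ hε hc]) z

lemma Qpulse_eq (hW : Continuous (window K a)) (hWD : ∀ x, |window K a x| ≤ D * exp (ρ * x))
    (hρ : 0 < ρ) (hγ : 0 ≤ γ) (hε : 0 ≤ ε) (hc : 0 ≤ c) :
    Qpulse K γ a c ε
      = expSmoothPair (-coeffQ γ c ε) (rate₁ γ c ε) (coeffQ γ c ε) (rate₂ γ c ε) (window K a) := by
  funext z
  simp only [Qpulse, Dx_eq]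
  exact integral_Iic_add_exp_mul hW hWD (by linarith [rate₁_nonneg hγ hε hc])
    (by linarith [rate₂_nonneg hγ hε hc]) z

lemma Uf_eq (K : ℝ → ℝ) (cf : ℝ) :
    Uf K cf = fun z => 1 / cf * expSmooth (1 / cf) (cumulative K) z := by
  funext z
  simp only [Uf, expSmooth, cumulative, div_eq_inv_mul, mul_one]

end Pulse

section Limits

variable (γ : ℝ) {cf : ℝ} {c : ℝ → ℝ}

lemma tendsto_om1 : Tendsto (om1 γ) (𝓝[>] 0) (𝓝 1) := by
  have h : Continuous (om1 γ) := by unfold om1; fun_prop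
  simpa [om1] using (h.tendsto 0).mono_left nhdsWithin_le_nhds

lemma tendsto_om2 : Tendsto (om2 γ) (𝓝[>] 0) (𝓝 0) := by
  have h : Continuous (om2 γ) := by unfold om2; fun_prop
  simpa [om2] using (h.tendsto 0).mono_left nhdsWithin_le_nhds

lemma tendsto_rate₁ (hcf : 0 < cf) (hc : Tendsto c (𝓝[>] 0) (𝓝 cf)) :
    Tendsto (fun ε => rate₁ γ (c ε) ε) (𝓝[>] 0) (𝓝 (1 / cf)) :=
  (tendsto_om1 γ).div hc hcf.ne'

lemma tendsto_rate₂ (hcf : 0 < cf) (hc : Tendsto c (𝓝[>] 0) (𝓝 cf)) :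
    Tendsto (fun ε => rate₂ γ (c ε) ε) (𝓝[>] 0) (𝓝 0) := by
  have h := (tendsto_om2 γ).div hc hcf.ne'
  rw [zero_div] at h
  exact h

lemma tendsto_mul_om1_sub_om2 (hc : Tendsto c (𝓝[>] 0) (𝓝 cf)) :
    Tendsto (fun ε => c ε * (om1 γ ε - om2 γ ε)) (𝓝[>] 0) (𝓝 cf) := by
  simpa using hc.mul ((tendsto_om1 γ).sub (tendsto_om2 γ))

lemma tendsto_coeffU₁ (hcf : 0 < cf) (hc : Tendsto c (𝓝[>] 0) (𝓝 cf)) :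
    Tendsto (fun ε => coeffU₁ γ (c ε) ε) (𝓝[>] 0) (𝓝 (1 / cf)) := by
  have h := ((tendsto_const_nhds (x := (1 : ℝ))).sub (tendsto_om2 γ)).div
    (tendsto_mul_om1_sub_om2 γ hc) hcf.ne'
  rw [sub_zero] at h
  exact h

lemma tendsto_coeffU₂ (hcf : 0 < cf) (hc : Tendsto c (𝓝[>] 0) (𝓝 cf)) :
    Tendsto (fun ε => coeffU₂ γ (c ε) ε) (𝓝[>] 0) (𝓝 0) := by
  have h := ((tendsto_const_nhds (x := (1 : ℝ))).sub (tendsto_om1 γ)).neg.div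
    (tendsto_mul_om1_sub_om2 γ hc) hcf.ne'
  rw [sub_self, neg_zero, zero_div] at h
  exact h

lemma tendsto_coeffQ (hcf : 0 < cf) (hc : Tendsto c (𝓝[>] 0) (𝓝 cf)) :
    Tendsto (fun ε => coeffQ γ (c ε) ε) (𝓝[>] 0) (𝓝 0) := by
  have h := (tendsto_id.mono_left nhdsWithin_le_nhds).div (tendsto_mul_om1_sub_om2 γ hc) hcf.ne'
  rw [zero_div] at h
  exact h

end Limits

section PulseConvergence

variable {K : ℝ → ℝ} {a c : ℝ → ℝ} {α ρ γ cf : ℝ}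

lemma eventually_pulse_params (hcf : 0 < cf) (hc : Tendsto c (𝓝[>] 0) (𝓝 cf))
    (ha : Tendsto a (𝓝[>] 0) atTop) : ∀ᶠ ε in 𝓝[>] (0 : ℝ), 0 ≤ ε ∧ 0 ≤ c ε ∧ 0 ≤ a ε :=
  (eventually_mem_nhdsWithin.mono fun _ (hε : 0 < _) => hε.le).and
    ((hc.eventually (eventually_ge_nhds hcf)).and (ha.eventually_ge_atTop 0))

lemma hasDerivAt_Uf (hK : Continuous K) (hKi : Integrable K) (hρ : 0 < ρ)
    (hKexp : ∀ y, |K y| ≤ α * exp (ρ * y)) (hcf : 0 < cf) (z : ℝ) :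
    HasDerivAt (Uf K cf)
      (1 / cf * (cumulative K z - 1 / cf * expSmooth (1 / cf) (cumulative K) z)) z := by
  rw [Uf_eq]
  exact (hasDerivAt_expSmooth (continuous_cumulative hK hKi) (by positivity)
    (abs_cumulative_le hρ hKexp) z).const_mul _

lemma tendstoUniformlyOn_Upulse_and_deriv (hK : Continuous K) (hKi : Integrable K) (hρ : 0 < ρ)
    (hKexp : ∀ y, |K y| ≤ α * exp (ρ * y)) (hγ : 0 ≤ γ) (hcf : 0 < cf)
    (hc : Tendsto c (𝓝[>] 0) (𝓝 cf)) (ha : Tendsto a (𝓝[>] 0) atTop) (z₀ : ℝ) :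
    TendstoUniformlyOn (fun ε => Upulse K γ (a ε) (c ε) ε) (Uf K cf) (𝓝[>] 0) (Iic z₀) ∧
    (∀ᶠ ε in 𝓝[>] 0, ∀ z, DifferentiableAt ℝ (Upulse K γ (a ε) (c ε) ε) z) ∧
    TendstoUniformlyOn (fun ε => deriv (Upulse K γ (a ε) (c ε) ε)) (deriv (Uf K cf))
      (𝓝[>] 0) (Iic z₀) := by
  have hparams := eventually_pulse_params hcf hc ha
  have hU : ∀ᶠ ε in 𝓝[>] 0, Upulse K γ (a ε) (c ε) ε = expSmoothPair (coeffU₁ γ (c ε) ε)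
      (rate₁ γ (c ε) ε) (coeffU₂ γ (c ε) ε) (rate₂ γ (c ε) ε) (window K (a ε)) := by
    filter_upwards [hparams] with ε ⟨hε, hcε, haε⟩
    exact Upulse_eq (continuous_window hK hKi _) (abs_window_le hKi hρ hKexp haε) hρ hγ hε hcε
  have hr₂ := hparams.mono fun ε ⟨hε, hcε, _⟩ => rate₂_nonneg hγ hε hcε
  refine ⟨?_, ?_, ?_⟩
  · refine ((tendstoUniformlyOn_expSmoothPair_window hK hKi hρ hKexp ha (tendsto_coeffU₁ γ hcf hc)
      (tendsto_coeffU₂ γ hcf hc) (tendsto_rate₁ γ hcf hc) (by positivity) hr₂ z₀).congr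
      (hU.mono fun ε h z _ => by rw [h])).congr_right fun z _ => by rw [Uf_eq]
  · filter_upwards [hparams, hU] with ε ⟨hε, hcε, haε⟩ h z
    rw [h]
    exact (hasDerivAt_expSmoothPair (continuous_window hK hKi _) (abs_window_le hKi hρ hKexp haε)
      (by linarith [rate₁_nonneg hγ hε hcε]) (by linarith [rate₂_nonneg hγ hε hcε])
      z).differentiableAt
  · refine ((tendstoUniformlyOn_deriv_expSmoothPair_window hK hKi hρ hKexp ha
      (tendsto_coeffU₁ γ hcf hc) (tendsto_coeffU₂ γ hcf hc) (tendsto_rate₁ γ hcf hc) (by positivity)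
      hr₂ (by simpa using (tendsto_coeffU₂ γ hcf hc).mul (tendsto_rate₂ γ hcf hc)) z₀).congr
      (hU.mono fun ε h z _ => by rw [h])).congr_right
      fun z _ => (hasDerivAt_Uf hK hKi hρ hKexp hcf z).deriv.symm

lemma tendstoUniformlyOn_Qpulse_and_deriv (hK : Continuous K) (hKi : Integrable K) (hρ : 0 < ρ)
    (hKexp : ∀ y, |K y| ≤ α * exp (ρ * y)) (hγ : 0 ≤ γ) (hcf : 0 < cf)
    (hc : Tendsto c (𝓝[>] 0) (𝓝 cf)) (ha : Tendsto a (𝓝[>] 0) atTop) (z₀ : ℝ) :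
    TendstoUniformlyOn (fun ε => Qpulse K γ (a ε) (c ε) ε) (fun _ => 0) (𝓝[>] 0) (Iic z₀) ∧
    (∀ᶠ ε in 𝓝[>] 0, ∀ z, DifferentiableAt ℝ (Qpulse K γ (a ε) (c ε) ε) z) ∧
    TendstoUniformlyOn (fun ε => deriv (Qpulse K γ (a ε) (c ε) ε)) (fun _ => 0)
      (𝓝[>] 0) (Iic z₀) := by
  have hparams := eventually_pulse_params hcf hc ha
  have hQ : ∀ᶠ ε in 𝓝[>] 0, Qpulse K γ (a ε) (c ε) ε = expSmoothPair (-coeffQ γ (c ε) ε)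
      (rate₁ γ (c ε) ε) (coeffQ γ (c ε) ε) (rate₂ γ (c ε) ε) (window K (a ε)) := by
    filter_upwards [hparams] with ε ⟨hε, hcε, haε⟩
    exact Qpulse_eq (continuous_window hK hKi _) (abs_window_le hKi hρ hKexp haε) hρ hγ hε hcε
  have hr₂ := hparams.mono fun ε ⟨hε, hcε, _⟩ => rate₂_nonneg hγ hε hcε
  have hA₁ : Tendsto (fun ε => -coeffQ γ (c ε) ε) (𝓝[>] 0) (𝓝 0) := by
    simpa using (tendsto_coeffQ γ hcf hc).neg
  refine ⟨?_, ?_, ?_⟩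
  · refine ((tendstoUniformlyOn_expSmoothPair_window hK hKi hρ hKexp ha hA₁
      (tendsto_coeffQ γ hcf hc) (tendsto_rate₁ γ hcf hc) (by positivity) hr₂ z₀).congr
      (hQ.mono fun ε h z _ => by rw [h])).congr_right fun z _ => zero_mul _
  · filter_upwards [hparams, hQ] with ε ⟨hε, hcε, haε⟩ h z
    rw [h]
    exact (hasDerivAt_expSmoothPair (continuous_window hK hKi _) (abs_window_le hKi hρ hKexp haε)
      (by linarith [rate₁_nonneg hγ hε hcε]) (by linarith [rate₂_nonneg hγ hε hcε])
      z).differentiableAt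
  · refine ((tendstoUniformlyOn_deriv_expSmoothPair_window hK hKi hρ hKexp ha hA₁
      (tendsto_coeffQ γ hcf hc) (tendsto_rate₁ γ hcf hc) (by positivity) hr₂
      (by simpa using (tendsto_coeffQ γ hcf hc).mul (tendsto_rate₂ γ hcf hc)) z₀).congr
      (hQ.mono fun ε h z _ => by rw [h])).congr_right fun z _ => zero_mul _

end PulseConvergence

theorem statement14_general (K : ℝ → ℝ)
    (hK : Continuous K)
    (hKdecay : ∃ α > (0:ℝ), ∃ ρ > (0:ℝ), ∀ x : ℝ, |K x| ≤ α * Real.exp (-ρ * |x|))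
    (γ cf z₀ : ℝ) (hγ : 0 < γ) (hcf : 0 < cf)
    (a c : ℝ → ℝ)
    (hccf : Tendsto c (𝓝[>] (0:ℝ)) (𝓝 cf)) (haT : Tendsto a (𝓝[>] (0:ℝ)) atTop) :
    (∀ δ > (0:ℝ), ∀ᶠ ε in 𝓝[>] (0:ℝ), ∀ z ≤ z₀,
        |Upulse K γ (a ε) (c ε) ε z - Uf K cf z| < δ) ∧
    ((∀ᶠ ε in 𝓝[>] (0:ℝ), ∀ z : ℝ, DifferentiableAt ℝ (Upulse K γ (a ε) (c ε) ε) z) ∧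
      ∀ δ > (0:ℝ), ∀ᶠ ε in 𝓝[>] (0:ℝ), ∀ z ≤ z₀,
        |deriv (Upulse K γ (a ε) (c ε) ε) z - deriv (Uf K cf) z| < δ) ∧
    (∀ δ > (0:ℝ), ∀ᶠ ε in 𝓝[>] (0:ℝ), ∀ z ≤ z₀,
        |Qpulse K γ (a ε) (c ε) ε z| < δ) ∧
    ((∀ᶠ ε in 𝓝[>] (0:ℝ), ∀ z : ℝ, DifferentiableAt ℝ (Qpulse K γ (a ε) (c ε) ε) z) ∧
      ∀ δ > (0:ℝ), ∀ᶠ ε in 𝓝[>] (0:ℝ), ∀ z ≤ z₀,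
        |deriv (Qpulse K γ (a ε) (c ε) ε) z| < δ) := by
  obtain ⟨α, hα, ρ, hρ, hKd⟩ := hKdecay
  have hKi := integrable_of_abs_le_exp_neg_abs hK hρ hKd
  have hKexp : ∀ y, |K y| ≤ α * exp (ρ * y) := fun y => (hKd y).trans
    (mul_le_mul_of_nonneg_left (exp_le_exp.2 (by nlinarith [neg_abs_le y])) hα.le)
  obtain ⟨hU, hUdiff, hU'⟩ :=
    tendstoUniformlyOn_Upulse_and_deriv hK hKi hρ hKexp hγ.le hcf hccf haT z₀
  obtain ⟨hQ, hQdiff, hQ'⟩ :=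
    tendstoUniformlyOn_Qpulse_and_deriv hK hKi hρ hKexp hγ.le hcf hccf haT z₀
  refine ⟨hU.eventually_abs_sub_lt, ⟨hUdiff, hU'.eventually_abs_sub_lt⟩, ?_, hQdiff, ?_⟩
  · simpa using hQ.eventually_abs_sub_lt
  · simpa using hQ'.eventually_abs_sub_lt

theorem statement14 (K : ℝ → ℝ)
    (hK : Continuous K)
    (hKdecay : ∃ α > (0:ℝ), ∃ ρ > (0:ℝ), ∀ x : ℝ, |K x| ≤ α * Real.exp (-ρ * |x|))
    (hKint : (∫ x : ℝ, K x) = 1)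
    (γ cf z₀ : ℝ) (hγ : 0 < γ) (hcf : 0 < cf)
    (a c : ℝ → ℝ)
    (hapos : ∀ᶠ ε in 𝓝[>] (0:ℝ), 0 < a ε) (hcpos : ∀ᶠ ε in 𝓝[>] (0:ℝ), 0 < c ε)
    (hccf : Tendsto c (𝓝[>] (0:ℝ)) (𝓝 cf)) (haT : Tendsto a (𝓝[>] (0:ℝ)) atTop) :
    (∀ δ > (0:ℝ), ∀ᶠ ε in 𝓝[>] (0:ℝ), ∀ z ≤ z₀,
        |Upulse K γ (a ε) (c ε) ε z - Uf K cf z| < δ) ∧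
    ((∀ᶠ ε in 𝓝[>] (0:ℝ), ∀ z : ℝ, DifferentiableAt ℝ (Upulse K γ (a ε) (c ε) ε) z) ∧
      ∀ δ > (0:ℝ), ∀ᶠ ε in 𝓝[>] (0:ℝ), ∀ z ≤ z₀,
        |deriv (Upulse K γ (a ε) (c ε) ε) z - deriv (Uf K cf) z| < δ) ∧
    (∀ δ > (0:ℝ), ∀ᶠ ε in 𝓝[>] (0:ℝ), ∀ z ≤ z₀,
        |Qpulse K γ (a ε) (c ε) ε z| < δ) ∧
    ((∀ᶠ ε in 𝓝[>] (0:ℝ), ∀ z : ℝ, DifferentiableAt ℝ (Qpulse K γ (a ε) (c ε) ε) z) ∧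
      ∀ δ > (0:ℝ), ∀ᶠ ε in 𝓝[>] (0:ℝ), ∀ z ≤ z₀,
        |deriv (Qpulse K γ (a ε) (c ε) ε) z| < δ) :=
  statement14_general K hK hKdecay γ cf z₀ hγ hcf a c hccf haT
end

section
/- Fix τ > 0, c > 0 and γ > 0, and for ε > 0 small define C̄(τ,c,ε) := C(−τ/ε, c, ε). Then the partial derivatives of C̄ exist for ε > 0 small, and as ε → 0⁺: the partial derivative of C̄ with respect to τ tends to (1/c)e^{−(1+γ)τ/c}; the partial derivative of C̄ with respect to c tends to −(τ/c²)e^{−(1+γ)τ/c}; and the partial derivative of C̄ with respect to ε tends to (τ/c − 2)e^{−(1+γ)τ/c}. -/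
open MeasureTheory Real Filter Set Topology

/-- `C(x,c,ε)`. -/
noncomputable def Cfun (γ x c ε : ℝ) : ℝ :=
  (1 / (om1 γ ε - om2 γ ε)) *
    (((1 - om2 γ ε) / om1 γ ε) * Real.exp (om1 γ ε * x / c)
      - ((1 - om1 γ ε) / om2 γ ε) * Real.exp (om2 γ ε * x / c))

/-- `C̄(τ,c,ε) := C(−τ/ε, c, ε)`. -/
noncomputable def Cbar (γ τ c ε : ℝ) : ℝ := Cfun γ (-τ / ε) c ε

/-!
Since `ω₁ ω₂ = (1 + γ) ε`, the exponents of `C̄` are `-(1 + γ) t / ω₂` and `-(1 + γ) t / ω₁`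
with `t = τ / c`, so `C̄` is a function of `t` and `ε`, and its `τ`- and `c`-derivatives are
`1 / c` and `-τ / c²` times its `t`-derivative. As `ε → 0⁺`, `ω₁ → 1` and `ω₂ → 0⁺`, so the
`ω₂`-term is `exp (-K / ω₂)`, which is flat at `ω₂ = 0`: it kills the `1 / ω₂` factor in the
`t`-derivative, and written as `expNegInvGlue (ω₂ / K)` it extends `C̄` smoothly across `ε = 0`.
The `ε`-derivative of `C̄` therefore tends to the derivative of that extension at `0`, to which
only the `ω₁`-term contributes.
-/

noncomputable def disc (γ ε : ℝ) : ℝ := (1 - γ * ε) ^ 2 - 4 * ε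

noncomputable def coef1 (γ ε : ℝ) : ℝ := (1 - om2 γ ε) / ((om1 γ ε - om2 γ ε) * om1 γ ε)

noncomputable def coef2 (γ ε : ℝ) : ℝ := (1 + γ - γ * om1 γ ε) / ((1 + γ) * (om1 γ ε - om2 γ ε))

noncomputable def cbarReduced (γ t ε : ℝ) : ℝ :=
  coef1 γ ε * exp (-(1 + γ) * t / om2 γ ε) - coef2 γ ε * exp (-(1 + γ) * t / om1 γ ε)

noncomputable def cbarReducedDerivT (γ t ε : ℝ) : ℝ :=
  (1 + γ) * (coef2 γ ε / om1 γ ε * exp (-(1 + γ) * t / om1 γ ε)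
    - coef1 γ ε / om2 γ ε * exp (-(1 + γ) * t / om2 γ ε))

noncomputable def cbarSmooth (γ t ε : ℝ) : ℝ :=
  coef1 γ ε * expNegInvGlue (om2 γ ε / ((1 + γ) * t)) - coef2 γ ε * exp (-(1 + γ) * t / om1 γ ε)

section roots

variable {γ ε : ℝ}

lemma om1_eq (γ ε : ℝ) : om1 γ ε = (1 + γ * ε + √(disc γ ε)) / 2 := rfl

lemma om2_eq (γ ε : ℝ) : om2 γ ε = (1 + γ * ε - √(disc γ ε)) / 2 := rfl

lemma om1_sub_om2 (γ ε : ℝ) : om1 γ ε - om2 γ ε = √(disc γ ε) := by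
  rw [om1_eq, om2_eq]; ring

lemma om1_add_om2 (γ ε : ℝ) : om1 γ ε + om2 γ ε = 1 + γ * ε := by
  rw [om1_eq, om2_eq]; ring

lemma om1_mul_om2 (hd : 0 ≤ disc γ ε) : om1 γ ε * om2 γ ε = (1 + γ) * ε := by
  have hsq := Real.sq_sqrt hd
  rw [om1_eq, om2_eq]
  unfold disc at hsq ⊢
  linear_combination (-1 / 4 : ℝ) * hsq

@[simp] lemma disc_zero (γ : ℝ) : disc γ 0 = 1 := by simp [disc]

@[simp] lemma om1_zero (γ : ℝ) : om1 γ 0 = 1 := by simp [om1_eq]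

@[simp] lemma om2_zero (γ : ℝ) : om2 γ 0 = 0 := by simp [om2_eq]

@[simp] lemma coef2_zero (γ : ℝ) : coef2 γ 0 = 1 / (1 + γ) := by simp [coef2]

lemma om2_pos (hγ : 0 ≤ γ) (hε : 0 < ε) (hd : 0 ≤ disc γ ε) : 0 < om2 γ ε := by
  have hsum := om1_add_om2 γ ε
  have hmul := om1_mul_om2 hd
  by_contra! h
  nlinarith [mul_nonneg hγ hε.le]

lemma eventually_regular (γ : ℝ) : ∀ᶠ ε in 𝓝 0, 0 < disc γ ε ∧ om1 γ ε ≠ 0 := by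
  have hd : ContinuousAt (disc γ) 0 := by unfold disc; fun_prop
  have h1 : ContinuousAt (om1 γ) 0 := by unfold om1; fun_prop
  exact (hd.eventually (lt_mem_nhds (by simp))).and (h1.eventually_ne (by simp))

lemma tendsto_om2_nhdsGT (hγ : 0 ≤ γ) : Tendsto (om2 γ) (𝓝[>] 0) (𝓝[>] 0) := by
  refine tendsto_nhdsWithin_iff.2 ⟨?_, ?_⟩
  · have h2 : ContinuousAt (om2 γ) 0 := by unfold om2; fun_prop
    simpa using h2.tendsto.mono_left nhdsWithin_le_nhds
  · filter_upwards [self_mem_nhdsWithin, nhdsWithin_le_nhds (eventually_regular γ)]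
      with ε hε hreg
    exact om2_pos hγ hε hreg.1.le

end roots

section reduction

variable {γ ε : ℝ}

lemma Cbar_eq_cbarReduced (τ c : ℝ) (hγ : 1 + γ ≠ 0) (hε : ε ≠ 0) (hd : 0 ≤ disc γ ε) :
    Cbar γ τ c ε = cbarReduced γ (τ / c) ε := by
  have hmul := om1_mul_om2 hd
  have h1 : om1 γ ε ≠ 0 := left_ne_zero_of_mul (hmul ▸ mul_ne_zero hγ hε)
  have h2 : om2 γ ε ≠ 0 := right_ne_zero_of_mul (hmul ▸ mul_ne_zero hγ hε)
  have hq1 : om1 γ ε / ε = (1 + γ) / om2 γ ε := (div_eq_div_iff hε h2).2 hmul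
  have hq2 : om2 γ ε / ε = (1 + γ) / om1 γ ε := (div_eq_div_iff hε h1).2 (by linarith)
  have hexp1 : om1 γ ε * (-τ / ε) / c = -(1 + γ) * (τ / c) / om2 γ ε := by
    rw [show om1 γ ε * (-τ / ε) / c = -(om1 γ ε / ε) * (τ / c) by ring, hq1]
    ring
  have hexp2 : om2 γ ε * (-τ / ε) / c = -(1 + γ) * (τ / c) / om1 γ ε := by
    rw [show om2 γ ε * (-τ / ε) / c = -(om2 γ ε / ε) * (τ / c) by ring, hq2]
    ring
  -- `(1 - ω₁) / ω₂` is `0 / 0` at `ε = 0`; this form of it extends smoothly there.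
  have hratio : (1 - om1 γ ε) / om2 γ ε = (1 + γ - γ * om1 γ ε) / (1 + γ) := by
    rw [div_eq_div_iff h2 hγ]
    linear_combination -(1 + γ) * om1_add_om2 γ ε + γ * hmul
  unfold Cbar Cfun cbarReduced coef1 coef2
  rw [hexp1, hexp2, hratio]
  simp only [div_eq_mul_inv, mul_inv]
  ring

lemma cbarReduced_eq_cbarSmooth {t : ℝ} (hγ : 0 ≤ γ) (ht : 0 < t) (hε : 0 < ε)
    (hd : 0 ≤ disc γ ε) : cbarReduced γ t ε = cbarSmooth γ t ε := by
  have h2 := om2_pos hγ hε hd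
  have hglue : expNegInvGlue (om2 γ ε / ((1 + γ) * t)) = exp (-(1 + γ) * t / om2 γ ε) := by
    rw [expNegInvGlue, if_neg (div_pos h2 (by positivity)).not_ge, inv_div, neg_mul, neg_div]
  rw [cbarReduced, cbarSmooth, hglue]

end reduction

section smooth

variable {γ ε : ℝ} {n : ℕ∞}

lemma contDiffAt_om1 (hd : disc γ ε ≠ 0) : ContDiffAt ℝ n (om1 γ) ε := by
  unfold om1
  fun_prop (disch := simpa [disc] using hd)

lemma contDiffAt_om2 (hd : disc γ ε ≠ 0) : ContDiffAt ℝ n (om2 γ) ε := by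
  unfold om2
  fun_prop (disch := simpa [disc] using hd)

lemma om1_sub_om2_ne_zero (hd : 0 < disc γ ε) : om1 γ ε - om2 γ ε ≠ 0 := by
  rw [om1_sub_om2]; positivity

lemma contDiffAt_coef1 (hd : 0 < disc γ ε) (h1 : om1 γ ε ≠ 0) : ContDiffAt ℝ n (coef1 γ) ε :=
  (contDiffAt_const.sub (contDiffAt_om2 hd.ne')).div
    (((contDiffAt_om1 hd.ne').sub (contDiffAt_om2 hd.ne')).mul (contDiffAt_om1 hd.ne'))
    (mul_ne_zero (om1_sub_om2_ne_zero hd) h1)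

lemma contDiffAt_coef2 (hγ : 1 + γ ≠ 0) (hd : 0 < disc γ ε) : ContDiffAt ℝ n (coef2 γ) ε :=
  (contDiffAt_const.sub (contDiffAt_const.mul (contDiffAt_om1 hd.ne'))).div
    (contDiffAt_const.mul ((contDiffAt_om1 hd.ne').sub (contDiffAt_om2 hd.ne')))
    (mul_ne_zero hγ (om1_sub_om2_ne_zero hd))

lemma contDiffAt_cbarSmooth (t : ℝ) (hγ : 1 + γ ≠ 0) (hd : 0 < disc γ ε) (h1 : om1 γ ε ≠ 0) :
    ContDiffAt ℝ n (cbarSmooth γ t) ε :=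
  ((contDiffAt_coef1 hd h1).mul (expNegInvGlue.contDiff.contDiffAt.comp ε
      ((contDiffAt_om2 hd.ne').div_const _))).sub
    ((contDiffAt_coef2 hγ hd).mul (contDiffAt_const.div (contDiffAt_om1 hd.ne') h1).exp)

end smooth

lemma hasDerivAt_cbarReduced_t (γ t ε : ℝ) :
    HasDerivAt (fun t => cbarReduced γ t ε) (cbarReducedDerivT γ t ε) t := by
  have hE (ω : ℝ) : HasDerivAt (fun t => exp (-(1 + γ) * t / ω))
      (exp (-(1 + γ) * t / ω) * (-(1 + γ) * 1 / ω)) t :=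
    (((hasDerivAt_id' t).const_mul _).div_const ω).exp
  refine (((hE (om2 γ ε)).const_mul (coef1 γ ε)).sub
    ((hE (om1 γ ε)).const_mul (coef2 γ ε))).congr_deriv ?_
  rw [cbarReducedDerivT]
  ring

lemma tendsto_exp_neg_div_div_nhdsGT_zero {K : ℝ} (hK : 0 < K) :
    Tendsto (fun x => exp (-K / x) / x) (𝓝[>] 0) (𝓝 0) := by
  have hinv : Tendsto (fun x => K / x) (𝓝[>] 0) atTop := by
    simpa only [div_eq_mul_inv] using tendsto_inv_nhdsGT_zero.const_mul_atTop hK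
  have h := ((tendsto_pow_mul_exp_neg_atTop_nhds_zero 1).comp hinv).div_const K
  rw [zero_div] at h
  refine h.congr' (eventually_nhdsWithin_of_forall fun x (hx : 0 < x) => ?_)
  simp only [Function.comp_apply, pow_one, neg_div]
  field_simp

lemma tendsto_cbarReducedDerivT {γ t : ℝ} (hγ : 0 ≤ γ) (ht : 0 < t) :
    Tendsto (cbarReducedDerivT γ t) (𝓝[>] 0) (𝓝 (exp (-(1 + γ) * t))) := by
  have hγ' : 1 + γ ≠ 0 := by positivity
  have hflat : Tendsto (fun ε => exp (-(1 + γ) * t / om2 γ ε) / om2 γ ε) (𝓝[>] 0) (𝓝 0) := by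
    simpa only [Function.comp_def, neg_mul, neg_div] using
      (tendsto_exp_neg_div_div_nhdsGT_zero (K := (1 + γ) * t) (by positivity)).comp
        (tendsto_om2_nhdsGT hγ)
  have h1 : ContinuousAt (om1 γ) 0 := (contDiffAt_om1 (n := 0) (by simp)).continuousAt
  have hcont : ContinuousAt (fun ε => coef2 γ ε / om1 γ ε * exp (-(1 + γ) * t / om1 γ ε)) 0 :=
    (((contDiffAt_coef2 (n := 0) hγ' (by simp)).continuousAt).div h1 (by simp)).mul
      (continuous_exp.continuousAt.comp (continuousAt_const.div h1 (by simp)))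
  have hcoef1 : ContinuousAt (coef1 γ) 0 :=
    (contDiffAt_coef1 (n := 0) (by simp) (by simp)).continuousAt
  have h := ((hcont.tendsto.mono_left nhdsWithin_le_nhds).sub
    ((hcoef1.tendsto.mono_left nhdsWithin_le_nhds).mul hflat)).const_mul (1 + γ)
  have hlim : (1 + γ) * (coef2 γ 0 / om1 γ 0 * exp (-(1 + γ) * t / om1 γ 0) - coef1 γ 0 * 0)
      = exp (-(1 + γ) * t) := by
    simp [hγ']
  rw [hlim] at h
  refine h.congr fun ε => ?_
  rw [cbarReducedDerivT]
  ring

section atZero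

variable {γ : ℝ}

lemma hasDerivAt_expNegInvGlue_zero : HasDerivAt expNegInvGlue 0 0 := by
  simpa using expNegInvGlue.hasDerivAt_polynomial_eval_inv_mul 1 0

lemma hasDerivAt_sqrt_disc_zero : HasDerivAt (fun ε => √(disc γ ε)) (-(γ + 2)) 0 := by
  have hdisc : HasDerivAt (disc γ) (-2 * γ - 4) 0 := by
    have h := ((((hasDerivAt_id' (0 : ℝ)).const_mul γ).const_sub 1).fun_pow 2).sub
      ((hasDerivAt_id' (0 : ℝ)).const_mul 4)
    exact h.congr_deriv (by norm_num)
  exact (hdisc.sqrt (by simp)).congr_deriv (by simp; ring)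

lemma hasDerivAt_om1_zero : HasDerivAt (om1 γ) (-1) 0 := by
  have h := ((((hasDerivAt_id' (0 : ℝ)).const_mul γ).const_add 1).add
    (hasDerivAt_sqrt_disc_zero (γ := γ))).div_const 2
  exact h.congr_deriv (by ring)

lemma hasDerivAt_coef2_zero (hγ : 1 + γ ≠ 0) : HasDerivAt (coef2 γ) 2 0 := by
  have hnum := (hasDerivAt_om1_zero (γ := γ)).const_mul γ |>.const_sub (1 + γ)
  have hden := (hasDerivAt_sqrt_disc_zero (γ := γ)).const_mul (1 + γ)
  have hfun : coef2 γ = fun ε => (1 + γ - γ * om1 γ ε) / ((1 + γ) * √(disc γ ε)) := by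
    ext ε
    rw [coef2, om1_sub_om2]
  rw [hfun]
  refine (hnum.div hden (by simpa using hγ)).congr_deriv ?_
  simp
  field_simp
  ring

lemma hasDerivAt_cbarSmooth_zero (t : ℝ) (hγ : 1 + γ ≠ 0) :
    HasDerivAt (cbarSmooth γ t) ((t - 2) * exp (-(1 + γ) * t)) 0 := by
  have hω2 : DifferentiableAt ℝ (om2 γ) 0 :=
    (contDiffAt_om2 (n := 1) (by simp)).differentiableAt one_ne_zero
  have hcoef1 : DifferentiableAt ℝ (coef1 γ) 0 :=
    (contDiffAt_coef1 (n := 1) (by simp) (by simp)).differentiableAt one_ne_zero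
  have hglue : HasDerivAt (fun ε => expNegInvGlue (om2 γ ε / ((1 + γ) * t))) 0 0 := by
    simpa [Function.comp_def] using hasDerivAt_expNegInvGlue_zero.comp_of_eq 0
      (hω2.hasDerivAt.div_const ((1 + γ) * t)) (by simp)
  have hexp := ((hasDerivAt_const (0 : ℝ) (-(1 + γ) * t)).div
    (hasDerivAt_om1_zero (γ := γ)) (by simp)).exp
  refine ((hcoef1.hasDerivAt.mul hglue).sub ((hasDerivAt_coef2_zero hγ).mul hexp)).congr_deriv ?_
  simp
  field_simp
  ring

lemma tendsto_deriv_cbarSmooth (t : ℝ) (hγ : 1 + γ ≠ 0) :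
    Tendsto (deriv (cbarSmooth γ t)) (𝓝 0) (𝓝 ((t - 2) * exp (-(1 + γ) * t))) := by
  rw [← (hasDerivAt_cbarSmooth_zero t hγ).deriv]
  exact ((contDiffAt_cbarSmooth (n := 1) t hγ (by simp) (by simp)).derivWithin (m := 0)
    (by norm_num)).continuousAt

end atZero

theorem statement17 (τ c γ : ℝ) (hτ : 0 < τ) (hc : 0 < c) (hγ : 0 < γ) :
    ∃ ε₀ > (0:ℝ), ∃ dτ dc de : ℝ → ℝ,
      (∀ ε ∈ Ioo (0:ℝ) ε₀,
        HasDerivAt (fun τ' => Cbar γ τ' c ε) (dτ ε) τ ∧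
        HasDerivAt (fun c' => Cbar γ τ c' ε) (dc ε) c ∧
        HasDerivAt (fun ε' => Cbar γ τ c ε') (de ε) ε) ∧
      Tendsto dτ (𝓝[>] (0:ℝ)) (𝓝 ((1 / c) * Real.exp (-(1 + γ) * τ / c))) ∧
      Tendsto dc (𝓝[>] (0:ℝ)) (𝓝 (-(τ / c ^ 2) * Real.exp (-(1 + γ) * τ / c))) ∧
      Tendsto de (𝓝[>] (0:ℝ)) (𝓝 ((τ / c - 2) * Real.exp (-(1 + γ) * τ / c))) := by
  have hγ' : 1 + γ ≠ 0 := by positivity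
  have ht : 0 < τ / c := div_pos hτ hc
  obtain ⟨ε₀, hε₀, hreg⟩ := mem_nhdsGT_iff_exists_Ioo_subset.1
    (nhdsWithin_le_nhds (eventually_regular γ))
  have hCbar {ε : ℝ} (hε : ε ∈ Ioo 0 ε₀) (τ' c' : ℝ) :
      Cbar γ τ' c' ε = cbarReduced γ (τ' / c') ε :=
    Cbar_eq_cbarReduced τ' c' hγ' hε.1.ne' (hreg hε).1.le
  rw [show -(1 + γ) * τ / c = -(1 + γ) * (τ / c) by ring]
  refine ⟨ε₀, hε₀, fun ε => 1 / c * cbarReducedDerivT γ (τ / c) ε,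
    fun ε => -(τ / c ^ 2) * cbarReducedDerivT γ (τ / c) ε, deriv (cbarSmooth γ (τ / c)),
    fun ε hε => ⟨?_, ?_, ?_⟩, ?_, ?_, ?_⟩
  · simp only [hCbar hε]
    exact ((hasDerivAt_cbarReduced_t γ _ ε).comp τ ((hasDerivAt_id' τ).div_const c)).congr_deriv
      (by ring)
  · simp only [hCbar hε]
    exact ((hasDerivAt_cbarReduced_t γ _ ε).comp c
      ((hasDerivAt_const c τ).div (hasDerivAt_id' c) hc.ne')).congr_deriv
      (by rw [Pi.div_apply]; ring)
  · have hsmooth : (fun ε' => Cbar γ τ c ε') =ᶠ[𝓝 ε] cbarSmooth γ (τ / c) := by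
      filter_upwards [isOpen_Ioo.mem_nhds hε] with ε' hε'
      rw [hCbar hε', cbarReduced_eq_cbarSmooth hγ.le ht hε'.1 (hreg hε').1.le]
    exact ((contDiffAt_cbarSmooth (n := 1) _ hγ' (hreg hε).1 (hreg hε).2).differentiableAt
      one_ne_zero).hasDerivAt.congr_of_eventuallyEq hsmooth
  · exact (tendsto_cbarReducedDerivT hγ.le ht).const_mul _
  · exact (tendsto_cbarReducedDerivT hγ.le ht).const_mul _
  · exact (tendsto_deriv_cbarSmooth _ hγ').mono_left nhdsWithin_le_nhds
end
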